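/- arXiv:2212.06990 — 2 statements merged into one kernel-verified Lean document; each statement's English description precedes it below -/
import Mathlib

section
/- Let W be an (m+p)×m minimum-phase matrix over K = RatFunc ℂ of full column rank m (as a matrix over the field K), and let Q be an m×m matrix over K with Q Q* = 1, every entry of Q proper, and every pole α of Q satisfying |α| < 1. If the product W Q is also minimum-phase, then Q is a constant unitary matrix: Q = RatFunc.C applied entrywise to some unitary U ∈ M_m(ℂ). (Uniqueness part of the paper's Lemma 2.3: a full-column-rank minimum-phase spectral factor is unique up to right multiplication by a constant unitary matrix.) -/
open Matrix

noncomputable section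

abbrev K : Type := RatFunc ℂ

/-- `α` is a pole of `q`: a root of the denominator of `q` in lowest terms. -/
def IsPole (α : ℂ) (q : K) : Prop := Polynomial.eval α (RatFunc.denom q) = 0

/-- `α` is a pole of a matrix if it is a pole of some entry. -/
def MIsPole {I J : Type} (α : ℂ) (W : Matrix I J K) : Prop := ∃ i j, IsPole α (W i j)

/-- Evaluation of a rational function at a point. -/
def evalAt (α : ℂ) (q : K) : ℂ := RatFunc.eval (RingHom.id ℂ) α q

/-- Entrywise evaluation of a matrix of rational functions. -/
def MEval {I J : Type} (α : ℂ) (W : Matrix I J K) : Matrix I J ℂ := W.map (evalAt α)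

/-- `W*`: the transpose of the entrywise application of `σ`. -/
def paraStar {I J : Type} (σ : K →+* K) (W : Matrix I J K) : Matrix J I K := (W.map σ)ᵀ

/-- `q` is proper: `0` is not a pole of `τ q` (where `τ` maps `X` to `X⁻¹`). -/
def Proper (τ : K →+* K) (q : K) : Prop := ¬ IsPole 0 (τ q)

/-- Discrete-time minimum phase: entries proper, all poles strictly inside the unit
circle, full column rank at every point outside the closed unit disc and at infinity. -/
def MinPhaseD (τ : K →+* K) {n m : Type} [Fintype n] [Fintype m]
    (W : Matrix n m K) : Prop :=
  (∀ i j, Proper τ (W i j)) ∧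
  (∀ α : ℂ, MIsPole α W → ‖α‖ < 1) ∧
  (∀ α : ℂ, 1 < ‖α‖ → (MEval α W).rank = Fintype.card m) ∧
  (MEval 0 (W.map τ)).rank = Fintype.card m

/-!
Since `Q Q* = 1`, `Q*` is the inverse of `Q`. Outside the closed unit disc and at infinity both
`W` and `Q` are regular and `W Q` has full column rank, so `Q` is invertible there and
`Q* = Q⁻¹` has no poles there. As `σ` exchanges the points `β` and `1 / conj β` (and `0` with
`∞`), this means that `Q` has no poles in the closed unit disc; together with the hypothesis on
the poles of `Q`, the entries of `Q` are polynomials, and being proper they are constants.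
Then `Q Q* = 1` says that this constant matrix is unitary.
-/

open scoped Polynomial

lemma not_isPole_of_eq_div {ζ : ℂ} {q : K} {f g : ℂ[X]}
    (hq : q = algebraMap ℂ[X] K f / algebraMap ℂ[X] K g) (hg : g.eval ζ ≠ 0) :
    ¬ IsPole ζ q := fun h =>
  hg (Polynomial.eval_eq_zero_of_dvd_of_eval_eq_zero (hq ▸ RatFunc.denom_div_dvd f g) h)

lemma eq_num_div_denom (q : K) :
    q = algebraMap ℂ[X] K q.num / algebraMap ℂ[X] K q.denom :=
  (RatFunc.num_div_denom q).symm

lemma algebraMap_ne_zero_of_eval_ne_zero {ζ : ℂ} {g : ℂ[X]} (hg : g.eval ζ ≠ 0) :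
    algebraMap ℂ[X] K g ≠ 0 :=
  RatFunc.algebraMap_ne_zero (by rintro rfl; exact hg (Polynomial.eval_zero))

def regularAt (ζ : ℂ) : Subring K where
  carrier := {q | ¬ IsPole ζ q}
  mul_mem' {a b} ha hb := by
    refine not_isPole_of_eq_div (f := a.num * b.num) (g := a.denom * b.denom) ?_
      (by rw [Polynomial.eval_mul]; exact mul_ne_zero ha hb)
    rw [map_mul, map_mul, mul_div_mul_comm, ← eq_num_div_denom, ← eq_num_div_denom]
  add_mem' {a b} ha hb := by
    refine not_isPole_of_eq_div (f := a.num * b.denom + a.denom * b.num)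
      (g := a.denom * b.denom) ?_ (by rw [Polynomial.eval_mul]; exact mul_ne_zero ha hb)
    conv_lhs => rw [eq_num_div_denom a, eq_num_div_denom b]
    rw [div_add_div _ _ (algebraMap_ne_zero_of_eval_ne_zero ha)
      (algebraMap_ne_zero_of_eval_ne_zero hb)]
    simp only [map_add, map_mul]
  one_mem' := by simp [IsPole]
  zero_mem' := by simp [IsPole]
  neg_mem' {a} ha := not_isPole_of_eq_div (f := -a.num) (g := a.denom)
    (by
      rw [map_neg]
      conv_lhs => rw [eq_num_div_denom a]
      exact (neg_div _ _).symm) ha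

lemma algebraMap_mem_regularAt (ζ : ℂ) (f : ℂ[X]) : algebraMap ℂ[X] K f ∈ regularAt ζ :=
  not_isPole_of_eq_div (f := f) (g := 1) (by simp) (by simp)

lemma evalAt_algebraMap (ζ : ℂ) (f : ℂ[X]) :
    evalAt ζ (algebraMap ℂ[X] K f) = f.eval ζ := by
  simp [evalAt, RatFunc.eval_algebraMap]

def evalRegularAt (ζ : ℂ) : regularAt ζ →+* ℂ where
  toFun q := evalAt ζ q
  map_one' := by simp [evalAt]
  map_zero' := by simp [evalAt]
  map_mul' a b := RatFunc.eval_mul (f := RingHom.id ℂ) (a := ζ) a.2 b.2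
  map_add' a b := RatFunc.eval_add (f := RingHom.id ℂ) (a := ζ) a.2 b.2

lemma evalRegularAt_apply (ζ : ℂ) (q : regularAt ζ) : evalRegularAt ζ q = evalAt ζ q := rfl

lemma inv_mem_regularAt {ζ : ℂ} {q : K} (h : evalAt ζ q ≠ 0) :
    q⁻¹ ∈ regularAt ζ := by
  refine not_isPole_of_eq_div (f := q.denom) (g := q.num) ?_ fun h0 => h ?_
  · conv_lhs => rw [eq_num_div_denom q]
    rw [inv_div]
  · simp [evalAt, RatFunc.eval, h0]

lemma isUnit_of_evalRegularAt_ne_zero {ζ : ℂ} (q : regularAt ζ) (h : evalRegularAt ζ q ≠ 0) :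
    IsUnit q := by
  have hq : (q : K) ≠ 0 := fun h0 => h (by simp [evalRegularAt_apply, h0, evalAt])
  exact IsUnit.of_mul_eq_one ⟨_, inv_mem_regularAt h⟩ (Subtype.ext (mul_inv_cancel₀ hq))

lemma evalAt_mul {ζ : ℂ} {p q : K} (hp : p ∈ regularAt ζ) (hq : q ∈ regularAt ζ) :
    evalAt ζ (p * q) = evalAt ζ p * evalAt ζ q :=
  map_mul (evalRegularAt ζ) ⟨p, hp⟩ ⟨q, hq⟩

lemma evalAt_inv {ζ : ℂ} {q : K} (hq : q ∈ regularAt ζ) (h : evalAt ζ q ≠ 0) :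
    evalAt ζ q⁻¹ = (evalAt ζ q)⁻¹ := by
  refine eq_inv_of_mul_eq_one_right ?_
  have hq0 : q ≠ 0 := fun h0 => h (by simp [h0, evalAt])
  rw [← evalAt_mul hq (inv_mem_regularAt h), mul_inv_cancel₀ hq0]
  simp [evalAt]

lemma MEval_map_subtype {n m : Type} (ζ : ℂ) (A : Matrix n m (regularAt ζ)) :
    MEval ζ (A.map (regularAt ζ).subtype) = A.map (evalRegularAt ζ) := rfl

section Matrix

variable {n m : Type} [Fintype m] [DecidableEq m]

lemma Matrix.isUnit_det_of_rank_eq_card {F : Type*} [Field F] {A : Matrix m m F}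
    (h : A.rank = Fintype.card m) : IsUnit A.det := by
  have hrange : LinearMap.range A.mulVecLin = ⊤ := Submodule.eq_top_of_finrank_eq (by
    rw [← Matrix.rank, h, Module.finrank_fintype_fun_eq_card])
  exact (Matrix.isUnit_iff_isUnit_det A).mp
    (Matrix.mulVec_surjective_iff_isUnit.mp (LinearMap.range_eq_top.mp hrange))

lemma Matrix.nonsing_inv_map {F L : Type*} [Field F] [Field L] (f : F →+* L)
    (A : Matrix m m F) : A⁻¹.map f = (A.map f)⁻¹ := by
  simp only [Matrix.inv_def, Ring.inverse_eq_inv']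
  rw [show A.map f = f.mapMatrix A from rfl, ← RingHom.map_det, ← RingHom.map_adjugate]
  ext
  simp

lemma inv_apply_mem_regularAt {ζ : ℂ} {A : Matrix n m K} {B : Matrix m m K}
    (hA : ∀ i j, A i j ∈ regularAt ζ) (hB : ∀ i j, B i j ∈ regularAt ζ)
    (hrank : (MEval ζ (A * B)).rank = Fintype.card m) (i j : m) : B⁻¹ i j ∈ regularAt ζ := by
  obtain ⟨A, rfl⟩ : ∃ A' : Matrix n m (regularAt ζ), A'.map (regularAt ζ).subtype = A :=
    ⟨fun i j => ⟨A i j, hA i j⟩, rfl⟩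
  obtain ⟨B, rfl⟩ : ∃ B' : Matrix m m (regularAt ζ), B'.map (regularAt ζ).subtype = B :=
    ⟨fun i j => ⟨B i j, hB i j⟩, rfl⟩
  rw [← Matrix.map_mul, MEval_map_subtype, Matrix.map_mul] at hrank
  have hrankB : (B.map (evalRegularAt ζ)).rank = Fintype.card m :=
    le_antisymm (Matrix.rank_le_card_width _) (hrank ▸ Matrix.rank_mul_le_right _ _)
  have hdet : IsUnit B.det := isUnit_of_evalRegularAt_ne_zero _ (by
    rw [RingHom.map_det]; exact (Matrix.isUnit_det_of_rank_eq_card hrankB).ne_zero)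
  have hinv : (B.map (regularAt ζ).subtype)⁻¹ = B⁻¹.map (regularAt ζ).subtype :=
    Matrix.inv_eq_left_inv (by rw [← Matrix.map_mul, Matrix.nonsing_inv_mul B hdet]; simp)
  rw [hinv]
  exact (B⁻¹ i j).2

end Matrix

lemma RatFunc.ringHom_ext {F L : Type*} [Field F] [Semiring L] {φ ψ : RatFunc F →+* L}
    (hC : ∀ c, φ (RatFunc.C c) = ψ (RatFunc.C c)) (hX : φ RatFunc.X = ψ RatFunc.X) :
    φ = ψ :=
  IsLocalization.ringHom_ext (nonZeroDivisors F[X]) <| Polynomial.ringHom_ext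
    (fun c => by simpa [RatFunc.algebraMap_C] using hC c) (by simpa [RatFunc.algebraMap_X] using hX)

lemma involutive_of_C_X {φ : K →+* K} (hC : ∀ c, φ (φ (RatFunc.C c)) = RatFunc.C c)
    (hX : φ (φ RatFunc.X) = RatFunc.X) : Function.Involutive φ :=
  RingHom.congr_fun (RatFunc.ringHom_ext (φ := φ.comp φ) (ψ := RingHom.id K) hC hX)

section CoefficientTwist

variable {φ : K →+* K} {e : ℂ →+* ℂ} {a b : ℂ}

lemma map_algebraMap_mem_regularAt (hC : ∀ c, φ (RatFunc.C c) = RatFunc.C (e c))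
    (hX : φ RatFunc.X ∈ regularAt b) (hXb : evalAt b (φ RatFunc.X) = e a) (f : ℂ[X]) :
    φ (algebraMap ℂ[X] K f) ∈ regularAt b ∧
      evalAt b (φ (algebraMap ℂ[X] K f)) = e (f.eval a) := by
  let ψ : ℂ[X] →+* regularAt b := Polynomial.eval₂RingHom
    ((RatFunc.C.comp e).codRestrict (regularAt b) fun c => by
      simpa [RatFunc.algebraMap_C] using algebraMap_mem_regularAt b (Polynomial.C (e c)))
    ⟨φ RatFunc.X, hX⟩
  have hψ : (regularAt b).subtype.comp ψ = φ.comp (algebraMap ℂ[X] K) :=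
    Polynomial.ringHom_ext (fun c => by simp [ψ, hC, RatFunc.algebraMap_C])
      (by simp [ψ, RatFunc.algebraMap_X])
  have hψ_eval : (evalRegularAt b).comp ψ = e.comp (Polynomial.evalRingHom a) :=
    Polynomial.ringHom_ext (fun c => by simp [ψ, evalRegularAt_apply, evalAt])
      (by simp [ψ, evalRegularAt_apply, hXb])
  have hf : φ (algebraMap ℂ[X] K f) = ψ f := (RingHom.congr_fun hψ f).symm
  exact ⟨hf ▸ (ψ f).2, hf ▸ RingHom.congr_fun hψ_eval f⟩

lemma map_mem_regularAt (hC : ∀ c, φ (RatFunc.C c) = RatFunc.C (e c))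
    (hX : φ RatFunc.X ∈ regularAt b) (hXb : evalAt b (φ RatFunc.X) = e a) {r : K}
    (hr : r ∈ regularAt a) : φ r ∈ regularAt b := by
  obtain ⟨hnum, -⟩ := map_algebraMap_mem_regularAt hC hX hXb r.num
  obtain ⟨hden, hden_eval⟩ := map_algebraMap_mem_regularAt hC hX hXb r.denom
  rw [eq_num_div_denom r, map_div₀, div_eq_mul_inv]
  exact mul_mem hnum (inv_mem_regularAt (by rw [hden_eval]; exact (map_ne_zero e).mpr hr))

end CoefficientTwist

section Properness

variable {τ : K →+* K}

lemma map_algebraMap_eq_eval₂ (φ : K →+* K) (f : ℂ[X]) :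
    φ (algebraMap ℂ[X] K f) = f.eval₂ (φ.comp RatFunc.C) (φ RatFunc.X) := by
  conv_lhs => rw [← f.eval₂_C_X]
  rw [Polynomial.hom_eval₂, Polynomial.hom_eval₂]
  congr 1

lemma map_algebraMap_mul_X_pow (hτC : ∀ c, τ (RatFunc.C c) = RatFunc.C c)
    (hτX : τ RatFunc.X = RatFunc.X⁻¹) {f : ℂ[X]} {N : ℕ} (hN : f.natDegree ≤ N) :
    τ (algebraMap ℂ[X] K f) * algebraMap ℂ[X] K (Polynomial.X ^ N)
      = algebraMap ℂ[X] K (f.reflect N) := by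
  have : Invertible (RatFunc.X⁻¹ : K) := invertibleOfNonzero (inv_ne_zero RatFunc.X_ne_zero)
  have h := Polynomial.eval₂_reflect_mul_pow RatFunc.C (RatFunc.X⁻¹ : K) N f hN
  rw [invOf_eq_inv, inv_inv] at h
  have hτ : τ.comp RatFunc.C = RatFunc.C := RingHom.ext hτC
  have hid := map_algebraMap_eq_eval₂ (RingHom.id K) (f.reflect N)
  rw [RingHom.id_apply, RingHom.id_comp, RingHom.id_apply] at hid
  rw [map_algebraMap_eq_eval₂, hτ, hτX, map_pow, RatFunc.algebraMap_X, hid, ← h, mul_assoc,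
    ← mul_pow, inv_mul_cancel₀ RatFunc.X_ne_zero, one_pow, mul_one]

lemma not_proper_algebraMap (hτC : ∀ c, τ (RatFunc.C c) = RatFunc.C c)
    (hτX : τ RatFunc.X = RatFunc.X⁻¹) {f : ℂ[X]} (hf : 0 < f.natDegree) :
    ¬ Proper τ (algebraMap ℂ[X] K f) := by
  intro hprop
  -- at `0`, the left side of `τ f * X ^ d = reflect d f` vanishes and the right side is the
  -- leading coefficient of `f`
  have h := congrArg (evalAt 0) (map_algebraMap_mul_X_pow hτC hτX le_rfl (f := f))
  rw [evalAt_mul hprop (algebraMap_mem_regularAt 0 _), evalAt_algebraMap, evalAt_algebraMap,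
    Polynomial.eval_pow, Polynomial.eval_X, zero_pow hf.ne', mul_zero,
    ← Polynomial.coeff_zero_eq_eval_zero, Polynomial.coeff_reflect,
    Polynomial.revAt_le (Nat.zero_le _), Nat.sub_zero] at h
  exact Polynomial.leadingCoeff_ne_zero.mpr (Polynomial.ne_zero_of_natDegree_gt hf) h.symm

lemma denom_eq_one_of_forall_not_isPole {q : K} (hq : ∀ ζ, ¬ IsPole ζ q) : q.denom = 1 := by
  refine Polynomial.Monic.natDegree_eq_zero (RatFunc.monic_denom q) |>.mp ?_
  by_contra hdeg
  obtain ⟨ζ, hζ⟩ := IsAlgClosed.exists_root q.denom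
    (fun h => hdeg (Polynomial.natDegree_eq_zero_iff_degree_le_zero.mpr h.le))
  exact hq ζ hζ

lemma exists_eq_C_of_forall_not_isPole (hτC : ∀ c, τ (RatFunc.C c) = RatFunc.C c)
    (hτX : τ RatFunc.X = RatFunc.X⁻¹) {q : K} (hq : ∀ ζ, ¬ IsPole ζ q)
    (hprop : Proper τ q) :
    ∃ c, q = RatFunc.C c := by
  obtain ⟨f, rfl⟩ : ∃ f : ℂ[X], q = algebraMap ℂ[X] K f := ⟨q.num, by
    conv_lhs => rw [eq_num_div_denom q]
    rw [denom_eq_one_of_forall_not_isPole hq, map_one, div_one]⟩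
  have hdeg : f.natDegree = 0 :=
    Nat.eq_zero_of_not_pos fun hpos => not_proper_algebraMap hτC hτX hpos hprop
  exact ⟨f.coeff 0, by rw [Polynomial.eq_C_of_natDegree_eq_zero hdeg, RatFunc.algebraMap_C,
    Polynomial.coeff_C_zero]⟩

end Properness

section Paraconjugation

variable {σ τ : K →+* K}

lemma forall_not_isPole_of_paraconj_regular
    (hσC : ∀ c, σ (RatFunc.C c) = RatFunc.C (starRingEnd ℂ c))
    (hσX : σ RatFunc.X = RatFunc.X⁻¹)
    (hτC : ∀ c, τ (RatFunc.C c) = RatFunc.C c) (hτX : τ RatFunc.X = RatFunc.X⁻¹) {q : K}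
    (hq : ∀ α, IsPole α q → ‖α‖ < 1)
    (hout : ∀ β : ℂ, 1 < ‖β‖ → σ q ∈ regularAt β)
    (hinf : τ (σ q) ∈ regularAt 0) (ζ : ℂ) : ¬ IsPole ζ q := by
  intro hζ
  have hX_mem : ∀ ξ, RatFunc.X ∈ regularAt ξ := fun ξ => by
    simpa [RatFunc.algebraMap_X] using algebraMap_mem_regularAt ξ Polynomial.X
  have hX_eval : ∀ ξ, evalAt ξ RatFunc.X = ξ := fun ξ => by simp [evalAt]
  rcases eq_or_ne ζ 0 with rfl | hζ0
  · have hκ : Function.Involutive (τ.comp σ) :=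
      involutive_of_C_X (fun c => by simp [hσC, hτC]) (by simp [hσX, hτX])
    have hreg : (τ.comp σ) ((τ.comp σ) q) ∈ regularAt 0 :=
      map_mem_regularAt (e := starRingEnd ℂ) (fun c => by simp [hσC, hτC])
        (by simpa [hσX, hτX] using hX_mem 0) (by simpa [hσX, hτX] using hX_eval 0) hinf
    rw [hκ q] at hreg
    exact hreg hζ
  · have hβ : 1 < ‖(starRingEnd ℂ ζ)⁻¹‖ := by
      rw [norm_inv, Complex.norm_conj]
      exact one_lt_inv₀ (norm_pos_iff.mpr hζ0) |>.mpr (hq ζ hζ)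
    have hXζ : evalAt ζ RatFunc.X ≠ 0 := by rwa [hX_eval]
    have hσ : Function.Involutive σ :=
      involutive_of_C_X (fun c => by simp [hσC]) (by simp [hσX])
    have hreg : σ (σ q) ∈ regularAt ζ :=
      map_mem_regularAt hσC (by rw [hσX]; exact inv_mem_regularAt hXζ)
        (by rw [hσX, evalAt_inv (hX_mem ζ) hXζ, hX_eval, map_inv₀, Complex.conj_conj])
        (hout _ hβ)
    rw [hσ q] at hreg
    exact hreg hζ

lemma paraStar_map_C (hσC : ∀ c, σ (RatFunc.C c) = RatFunc.C (starRingEnd ℂ c)) {I J : Type}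
    (U : Matrix I J ℂ) : paraStar σ (U.map (RatFunc.C : ℂ → K)) = Uᴴ.map RatFunc.C := by
  ext i j
  simp [paraStar, hσC]

lemma mul_conjTranspose_eq_one_of_map_C
    (hσC : ∀ c, σ (RatFunc.C c) = RatFunc.C (starRingEnd ℂ c))
    {m : Type} [Fintype m] [DecidableEq m] {U : Matrix m m ℂ}
    (h : U.map (RatFunc.C : ℂ → K) * paraStar σ (U.map RatFunc.C) = 1) : U * Uᴴ = 1 := by
  apply Matrix.map_injective (RatFunc.C : ℂ →+* K).injective
  beta_reduce
  rw [Matrix.map_mul, ← paraStar_map_C hσC, h, Matrix.map_one _ (map_zero _) (map_one _)]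

end Paraconjugation

lemma mem_regularAt_of_norm_gt {I J : Type} {A : Matrix I J K}
    (hA : ∀ α, MIsPole α A → ‖α‖ < 1)
    {β : ℂ} (hβ : 1 < ‖β‖) (i : I) (j : J) : A i j ∈ regularAt β :=
  fun h => lt_asymm hβ (hA β ⟨i, j, h⟩)

theorem minimum_phase_factor_unique_up_to_unitary_general (m p : ℕ)
    (σ : K →+* K)
    (hσC : ∀ c : ℂ, σ (RatFunc.C c) = RatFunc.C ((starRingEnd ℂ) c))
    (hσX : σ RatFunc.X = RatFunc.X⁻¹)
    (τ : K →+* K)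
    (hτC : ∀ c : ℂ, τ (RatFunc.C c) = RatFunc.C c)
    (hτX : τ RatFunc.X = RatFunc.X⁻¹)
    (W : Matrix (Fin (m + p)) (Fin m) K)
    (hWmp : MinPhaseD τ W)
    (Q : Matrix (Fin m) (Fin m) K)
    (hinner : Q * paraStar σ Q = 1)
    (hQprop : ∀ i j, Proper τ (Q i j))
    (hQpole : ∀ α : ℂ, MIsPole α Q → ‖α‖ < 1)
    (hWQmp : MinPhaseD τ (W * Q)) :
    ∃ U : Matrix (Fin m) (Fin m) ℂ,
      Uᴴ * U = 1 ∧ U * Uᴴ = 1 ∧ Q = U.map (fun c : ℂ => (RatFunc.C c : K)) := by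
  obtain ⟨hWprop, hWpole, -, -⟩ := hWmp
  obtain ⟨-, -, hWQrank, hWQrank_inf⟩ := hWQmp
  have hQinv : Q⁻¹ = paraStar σ Q := Matrix.inv_eq_right_inv hinner
  have hout : ∀ i j, ∀ β : ℂ, 1 < ‖β‖ → σ (Q i j) ∈ regularAt β := by
    intro i j β hβ
    simpa [hQinv, paraStar] using inv_apply_mem_regularAt (mem_regularAt_of_norm_gt hWpole hβ)
      (mem_regularAt_of_norm_gt hQpole hβ) (hWQrank β hβ) j i
  have hinf : ∀ i j, τ (σ (Q i j)) ∈ regularAt 0 := by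
    intro i j
    simpa [← Matrix.nonsing_inv_map, hQinv, paraStar] using inv_apply_mem_regularAt
      (A := W.map τ) (B := Q.map τ) hWprop hQprop (by rwa [← Matrix.map_mul]) j i
  have hconst : ∀ i j, ∃ c, Q i j = RatFunc.C c := fun i j =>
    exists_eq_C_of_forall_not_isPole hτC hτX (forall_not_isPole_of_paraconj_regular hσC hσX hτC
      hτX (fun α hα => hQpole α ⟨i, j, hα⟩) (hout i j) (hinf i j)) (hQprop i j)
  choose U hU using hconst
  have hQU : Q = (Matrix.of U).map (fun c : ℂ => (RatFunc.C c : K)) := Matrix.ext hU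
  have hUU : Matrix.of U * (Matrix.of U)ᴴ = 1 :=
    mul_conjTranspose_eq_one_of_map_C hσC (hQU ▸ hinner)
  exact ⟨Matrix.of U, mul_eq_one_comm.mp hUU, hUU, hQU⟩

theorem minimum_phase_factor_unique_up_to_unitary (m p : ℕ)
    (σ : K →+* K)
    (hσC : ∀ c : ℂ, σ (RatFunc.C c) = RatFunc.C ((starRingEnd ℂ) c))
    (hσX : σ RatFunc.X = RatFunc.X⁻¹)
    (τ : K →+* K)
    (hτC : ∀ c : ℂ, τ (RatFunc.C c) = RatFunc.C c)
    (hτX : τ RatFunc.X = RatFunc.X⁻¹)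
    (W : Matrix (Fin (m + p)) (Fin m) K)
    (hWmp : MinPhaseD τ W)
    (hWrank : W.rank = m)
    (Q : Matrix (Fin m) (Fin m) K)
    (hinner : Q * paraStar σ Q = 1)
    (hQprop : ∀ i j, Proper τ (Q i j))
    (hQpole : ∀ α : ℂ, MIsPole α Q → ‖α‖ < 1)
    (hWQmp : MinPhaseD τ (W * Q)) :
    ∃ U : Matrix (Fin m) (Fin m) ℂ,
      Uᴴ * U = 1 ∧ U * Uᴴ = 1 ∧ Q = U.map (fun c : ℂ => (RatFunc.C c : K)) :=
  minimum_phase_factor_unique_up_to_unitary_general m p σ hσC hσX τ hτC hτX W hWmp Q hinner hQprop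
    hQpole hWQmp
end
end

section
/- Let G1 be an m×m invertible minimum-phase matrix over K = RatFunc ℂ and let H be a p×m matrix over K such that every entry of H is proper and every pole α of H satisfies |α| < 1. Then the (m+p)×m matrix W := [G1; H·G1] (G1 stacked on top of H·G1) is minimum-phase with full column rank m, and the spectral density Φ := W W* has blocks Φ11 = G1 G1* (invertible), Φ21 = H Φ11, and Φ21 Φ11⁻¹ = H. (The special-case spectral factorization formula (3.4) of the paper: when H is stable, a minimum-phase full-rank spectral factor is obtained without any coprime factorization.) -/
open Matrix

noncomputable section

/-!
The denominator of a sum or product divides the product of the denominators, so every pole of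
`H * G1`, and of its image under `τ`, is a pole of `H` or of `G1`: stacking `H * G1` under `G1`
creates neither improper entries nor poles outside the unit disc, while the top block `G1` alone
already has full column rank wherever the rank is tested. The block identities come from
`[G1; H G1] [G1; H G1]* = [G1 G1*, G1 G1* H*; H G1 G1*, H G1 G1* H*]`.
-/

lemma IsPole.of_denom_dvd {α : ℂ} {q r s : K} (hdvd : s.denom ∣ q.denom * r.denom)
    (h : IsPole α s) : IsPole α q ∨ IsPole α r := by
  obtain ⟨c, hc⟩ := hdvd
  have := congrArg (Polynomial.eval α) hc
  rw [Polynomial.eval_mul, Polynomial.eval_mul, h, zero_mul] at this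
  exact mul_eq_zero.mp this

lemma IsPole.of_add {α : ℂ} {q r : K} (h : IsPole α (q + r)) : IsPole α q ∨ IsPole α r :=
  h.of_denom_dvd (RatFunc.denom_add_dvd q r)

lemma IsPole.of_mul {α : ℂ} {q r : K} (h : IsPole α (q * r)) : IsPole α q ∨ IsPole α r :=
  h.of_denom_dvd (RatFunc.denom_mul_dvd q r)

lemma MIsPole.of_mul {α : ℂ} {I J L : Type} [Fintype J] {A : Matrix I J K} {B : Matrix J L K}
    (h : MIsPole α (A * B)) : MIsPole α A ∨ MIsPole α B := by
  obtain ⟨i, j, hij⟩ := h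
  by_contra! hAB
  revert hij
  rw [mul_apply]
  refine Finset.sum_induction _ (fun q => ¬ IsPole α q)
    (fun _ _ hq hr hqr => hqr.of_add.elim hq hr) (by simp [IsPole]) fun k _ hk => ?_
  exact hk.of_mul.elim (fun h => hAB.1 ⟨i, k, h⟩) (fun h => hAB.2 ⟨k, j, h⟩)

lemma Proper.mul_apply {τ : K →+* K} {I J L : Type} [Fintype J] {A : Matrix I J K}
    {B : Matrix J L K} (hA : ∀ i k, Proper τ (A i k)) (hB : ∀ k j, Proper τ (B k j))
    (i : I) (j : L) : Proper τ ((A * B) i j) := by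
  intro hpole
  have : MIsPole 0 (A.map τ * B.map τ) := ⟨i, j, by rwa [← Matrix.map_mul]⟩
  rcases this.of_mul with ⟨i, k, h⟩ | ⟨k, j, h⟩
  exacts [hA i k h, hB k j h]

lemma rank_fromRows_of_rank_eq_card {R : Type*} [CommRing R] [StrongRankCondition R]
    {m₁ m₂ n : Type} [Fintype n] {A : Matrix m₁ n R} (B : Matrix m₂ n R)
    (hA : A.rank = Fintype.card n) : (fromRows A B).rank = Fintype.card n :=
  le_antisymm (rank_le_card_width _) (hA ▸ rank_submatrix_le (fromRows A B) Sum.inl id)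

theorem MinPhaseD.fromRows {τ : K →+* K} {n₁ n₂ m : Type} [Fintype n₁] [Fintype n₂] [Fintype m]
    {A : Matrix n₁ m K} {B : Matrix n₂ m K} (hA : MinPhaseD τ A)
    (hBprop : ∀ i j, Proper τ (B i j)) (hBpole : ∀ α : ℂ, MIsPole α B → ‖α‖ < 1) :
    MinPhaseD τ (fromRows A B) := by
  obtain ⟨hprop, hpole, hrank, hrank_inf⟩ := hA
  refine ⟨?_, ?_, fun α hα => ?_, ?_⟩
  · rintro (i | i) j
    exacts [hprop i j, hBprop i j]
  · rintro α ⟨i | i, j, h⟩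
    exacts [hpole α ⟨i, j, h⟩, hBpole α ⟨i, j, h⟩]
  · rw [MEval, fromRows_map]
    exact rank_fromRows_of_rank_eq_card _ (hrank α hα)
  · rw [fromRows_map, MEval, fromRows_map]
    exact rank_fromRows_of_rank_eq_card _ hrank_inf

lemma paraStar_fromRows (σ : K →+* K) {n₁ n₂ m : Type} (A : Matrix n₁ m K)
    (B : Matrix n₂ m K) : paraStar σ (fromRows A B) = fromCols (paraStar σ A) (paraStar σ B) := by
  rw [paraStar, fromRows_map, transpose_fromRows]
  rfl

lemma fromRows_mul_paraStar (σ : K →+* K) {n₁ n₂ m : Type} [Fintype m] (A : Matrix n₁ m K)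
    (B : Matrix n₂ m K) :
    fromRows A B * paraStar σ (fromRows A B) =
      fromBlocks (A * paraStar σ A) (A * paraStar σ B) (B * paraStar σ A) (B * paraStar σ B) := by
  rw [paraStar_fromRows, fromRows_mul_fromCols]

lemma isUnit_det_paraStar (σ : K →+* K) {n : Type} [Fintype n] [DecidableEq n]
    {A : Matrix n n K} (hA : IsUnit A.det) : IsUnit (paraStar σ A).det := by
  rw [paraStar, det_transpose]
  convert hA.map σ using 1
  exact (RingHom.map_det σ A).symm

theorem special_case_spectral_factorization_general (m p : ℕ)
    (σ : K →+* K)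
    (τ : K →+* K)
    (G1 : Matrix (Fin m) (Fin m) K)
    (hG1det : IsUnit G1.det)
    (hG1mp : MinPhaseD τ G1)
    (H : Matrix (Fin p) (Fin m) K)
    (hHprop : ∀ i j, Proper τ (H i j))
    (hHpole : ∀ α : ℂ, MIsPole α H → ‖α‖ < 1) :
    MinPhaseD τ (Matrix.fromRows G1 (H * G1)) ∧
    (Matrix.fromRows G1 (H * G1)).rank = m ∧
    (let W := Matrix.fromRows G1 (H * G1);
     let Φ := W * paraStar σ W;
     Φ.toBlocks₁₁ = G1 * paraStar σ G1 ∧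
     IsUnit (Φ.toBlocks₁₁).det ∧
     Φ.toBlocks₂₁ = H * Φ.toBlocks₁₁ ∧
     Φ.toBlocks₂₁ * (Φ.toBlocks₁₁)⁻¹ = H) := by
  have hHG1prop := Proper.mul_apply hHprop hG1mp.1
  have hHG1pole (α : ℂ) (hα : MIsPole α (H * G1)) : ‖α‖ < 1 :=
    hα.of_mul.elim (hHpole α) (hG1mp.2.1 α)
  have hΦ₁₁ : IsUnit (G1 * paraStar σ G1).det := by
    rw [det_mul]
    exact hG1det.mul (isUnit_det_paraStar σ hG1det)
  refine ⟨hG1mp.fromRows hHG1prop hHG1pole, ?_, ?_⟩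
  · simpa using rank_fromRows_of_rank_eq_card (H * G1) (rank_of_isUnit G1 <|
      (isUnit_iff_isUnit_det G1).mpr hG1det)
  · simp only [fromRows_mul_paraStar, toBlocks_fromBlocks₁₁, toBlocks_fromBlocks₂₁, true_and]
    refine ⟨hΦ₁₁, Matrix.mul_assoc _ _ _, ?_⟩
    rw [Matrix.mul_assoc H G1, mul_nonsing_inv_cancel_right _ _ hΦ₁₁]

theorem special_case_spectral_factorization (m p : ℕ)
    (σ : K →+* K)
    (hσC : ∀ c : ℂ, σ (RatFunc.C c) = RatFunc.C ((starRingEnd ℂ) c))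
    (hσX : σ RatFunc.X = RatFunc.X⁻¹)
    (τ : K →+* K)
    (hτC : ∀ c : ℂ, τ (RatFunc.C c) = RatFunc.C c)
    (hτX : τ RatFunc.X = RatFunc.X⁻¹)
    (G1 : Matrix (Fin m) (Fin m) K)
    (hG1det : IsUnit G1.det)
    (hG1mp : MinPhaseD τ G1)
    (H : Matrix (Fin p) (Fin m) K)
    (hHprop : ∀ i j, Proper τ (H i j))
    (hHpole : ∀ α : ℂ, MIsPole α H → ‖α‖ < 1) :
    MinPhaseD τ (Matrix.fromRows G1 (H * G1)) ∧
    (Matrix.fromRows G1 (H * G1)).rank = m ∧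
    (let W := Matrix.fromRows G1 (H * G1);
     let Φ := W * paraStar σ W;
     Φ.toBlocks₁₁ = G1 * paraStar σ G1 ∧
     IsUnit (Φ.toBlocks₁₁).det ∧
     Φ.toBlocks₂₁ = H * Φ.toBlocks₁₁ ∧
     Φ.toBlocks₂₁ * (Φ.toBlocks₁₁)⁻¹ = H) :=
  special_case_spectral_factorization_general m p σ τ G1 hG1det hG1mp H hHprop hHpole
end
end
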